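/- arXiv:2512.08151 — 3 statements merged into one kernel-verified Lean document; each statement's English description precedes it below -/
import Mathlib

section
/- Let μ be a probability measure on Γ. Then for every n ∈ ℕ and every γ ∈ Γ, μ_n(γ) = ∫_{[−1/2,1/2]^m} (ℒ_v^n 1_{x_γ})(id) · e^{−2πi·⟨v, Φ(γ)⟩} dv, where the integral is with respect to Lebesgue measure on the cube [−1/2,1/2]^m ⊂ ℝ^m and x_γ ∈ Δ denotes the representative of the coset Λγ. -/
/-
Unfolding the iterates gives `(ℒ_v^n f)(x) = ∑_s μ_n(s) e^{2πi⟨v, α(x,s)⟩} f(x^s)`: by the cocycle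
identity `α(x, st) = α(x, s) + α(x^s, t)`, the double sum defining `ℒ_v^{n+1} f = ℒ_v^n (ℒ_v f)`
becomes a sum against `μ_n * μ = μ_{n+1}`. At `x = id` the cocycle is `Φ`, so the integrand is the
absolutely convergent series `∑_s μ_n(s) 1_{x_γ}(x_s) e^{2πi⟨v, Φ(s) - Φ(γ)⟩}`. Integrating term by
term over the unit cube keeps only the `s` with `x_s = x_γ` and `Φ(s) = Φ(γ)`, and these two data
determine `s = γ`.
-/

open scoped BigOperators Classical
open Filter Matrix MeasureTheory

namespace NSVA

noncomputable section

/-- Convolution of two real-valued functions on a group. -/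
def conv {G : Type*} [Group G] (μ ν : G → ℝ) : G → ℝ :=
  fun g => ∑' h : G, μ h * ν (h⁻¹ * g)

/-- Convolution powers: `convPow μ 0 = δ_1`, `convPow μ (n+1) = (convPow μ n) * μ`. -/
def convPow {G : Type*} [Group G] (μ : G → ℝ) : ℕ → G → ℝ
  | 0 => fun g => if g = 1 then 1 else 0
  | n + 1 => conv (convPow μ n) μ

/-- A probability measure on a countable set, viewed as a function. -/
def IsProb {G : Type*} (μ : G → ℝ) : Prop := (∀ g, 0 ≤ μ g) ∧ HasSum μ 1

/-- The support of `μ` generates the group as a semigroup. -/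
def Nondeg {G : Type*} [Group G] (μ : G → ℝ) : Prop :=
  ∀ g : G, g ∈ Subsemigroup.closure {x : G | 0 < μ x}

/-- `μ` is aperiodic: `μ_n(1) > 0` for all large enough `n`. -/
def Aperiodic {G : Type*} [Group G] (μ : G → ℝ) : Prop :=
  ∃ N : ℕ, ∀ n : ℕ, N ≤ n → 0 < convPow μ n 1

/-- Total variation distance between two (probability) functions. -/
def tv {Z : Type*} (p q : Z → ℝ) : ℝ := (1 / 2) * ∑' z : Z, |p z - q z|

/-- Word length with respect to a finite set `S₀`. -/
def wordLength {G : Type*} [Group G] (S₀ : Finset G) (g : G) : ℕ :=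
  sInf {n : ℕ | ∃ l : List G, (∀ s ∈ l, s ∈ S₀) ∧ l.length = n ∧ l.prod = g}

/-- Finite second moment with respect to a word metric given by a finite symmetric
generating set. -/
def FinSecondMoment {G : Type*} [Group G] (μ : G → ℝ) : Prop :=
  ∃ S₀ : Finset G, (∀ s ∈ S₀, s⁻¹ ∈ S₀) ∧ Subgroup.closure (S₀ : Set G) = ⊤ ∧
    Summable (fun g : G => (wordLength S₀ g : ℝ) ^ 2 * μ g)

/-- A group is virtually abelian if it has an abelian subgroup of finite index. -/
def VirtAbelian (G : Type*) [Group G] : Prop :=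
  ∃ A : Subgroup G, A.index ≠ 0 ∧ ∀ a b : A, a * b = b * a

/-- The noised measure `π^ρ` on `G × G`. -/
def noised {G : Type*} (μ : G → ℝ) (ρ : ℝ) : G × G → ℝ :=
  fun p => ρ * μ p.1 * μ p.2 + (1 - ρ) * μ p.1 * (if p.1 = p.2 then 1 else 0)

/-- First marginal of a measure on a product. -/
def marg1 {G₁ G₂ : Type*} (ν : G₁ × G₂ → ℝ) : G₁ → ℝ := fun γ₁ => ∑' γ₂ : G₂, ν (γ₁, γ₂)

/-- Second marginal of a measure on a product. -/
def marg2 {G₁ G₂ : Type*} (ν : G₁ × G₂ → ℝ) : G₂ → ℝ := fun γ₂ => ∑' γ₁ : G₁, ν (γ₁, γ₂)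

/-- A system of representatives of the right cosets `Λ\Γ` containing the identity,
together with the representative map `rep`, constant on right cosets. -/
structure RepSystem {Γ : Type*} [Group Γ] (Λ : Subgroup Γ) where
  Δ : Finset Γ
  one_mem : (1 : Γ) ∈ Δ
  rep : Γ → Γ
  rep_mem : ∀ γ : Γ, rep γ ∈ Δ
  rep_spec : ∀ γ : Γ, γ * (rep γ)⁻¹ ∈ Λ
  rep_idem : ∀ x ∈ Δ, rep x = x
  rep_coset : ∀ γ : Γ, ∀ v ∈ Λ, rep (v * γ) = rep γ

variable {Γ : Type*} [Group Γ] {Λ : Subgroup Γ} {m : ℕ}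

/-- The cocycle `α(x,s) = ψ(x·s·(x^s)⁻¹) ∈ ℤ^m`. -/
def cocycle (ψ : Λ ≃* Multiplicative (Fin m → ℤ)) (R : RepSystem Λ) (x s : Γ) : Fin m → ℤ :=
  Multiplicative.toAdd (ψ ⟨x * s * (R.rep (x * s))⁻¹, R.rep_spec (x * s)⟩)

/-- The transfer homomorphism `θ(γ) = ∑_{x∈Δ} α(x,γ)`. -/
def transfer (ψ : Λ ≃* Multiplicative (Fin m → ℤ)) (R : RepSystem Λ) (γ : Γ) : Fin m → ℤ :=
  ∑ x ∈ R.Δ, cocycle ψ R x γ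

/-- `Φ(γ) = ψ(v)` where `γ = v·x`, `v ∈ Λ`, `x ∈ Δ`. -/
def Phi (ψ : Λ ≃* Multiplicative (Fin m → ℤ)) (R : RepSystem Λ) (γ : Γ) : Fin m → ℤ :=
  Multiplicative.toAdd (ψ ⟨γ * (R.rep γ)⁻¹, R.rep_spec γ⟩)

/-- A 1-form on the quotient diagram. -/
def IsOneForm (R : RepSystem Λ) (ω : Γ → Γ → ℝ) : Prop :=
  ∀ x ∈ R.Δ, ∀ s : Γ, ω (R.rep (x * s)) s⁻¹ = -ω x s

/-- `χ(ω) = ∑_{x∈Δ} ∑_s c(x,s)·ω(x,s)` where `c(x,s) = μ(s)/#F`. -/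
def chi (R : RepSystem Λ) (μ : Γ → ℝ) (ω : Γ → Γ → ℝ) : ℝ :=
  ∑ x ∈ R.Δ, ∑' s : Γ, μ s / (Λ.index : ℝ) * ω x s

/-- Square-integrability of a 1-form. -/
def SqInt (R : RepSystem Λ) (μ : Γ → ℝ) (ω : Γ → Γ → ℝ) : Prop :=
  ∀ x ∈ R.Δ, Summable (fun s : Γ => μ s / (Λ.index : ℝ) * ω x s ^ 2)

/-- Harmonicity of a (square-integrable) 1-form. -/
def Harmonic (R : RepSystem Λ) (μ : Γ → ℝ) (ω : Γ → Γ → ℝ) : Prop :=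
  SqInt R μ ω ∧ ∀ x ∈ R.Δ, (∑' s : Γ, μ s * ω x s) = chi R μ ω

/-- The differential `df(x,s) = f(x^s) − f(x)`. -/
def dd (R : RepSystem Λ) (f : Γ → ℝ) : Γ → Γ → ℝ := fun x s => f (R.rep (x * s)) - f x

/-- `(u, f)` is a harmonic decomposition of the 1-form `ω`: `ω = u + df` with `u`
a harmonic 1-form. -/
def IsHarmDecomp (R : RepSystem Λ) (μ : Γ → ℝ) (ω u : Γ → Γ → ℝ) (f : Γ → ℝ) : Prop :=
  IsOneForm R u ∧ Harmonic R μ u ∧ ∀ x ∈ R.Δ, ∀ s : Γ, ω x s = u x s + dd R f x s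

/-- The 1-form `v̂(x,s) = ⟨v, α(x,s)⟩` (standard inner product). -/
def vhat (ψ : Λ ≃* Multiplicative (Fin m → ℤ)) (R : RepSystem Λ) (v : Fin m → ℝ) :
    Γ → Γ → ℝ :=
  fun x s => ∑ i, v i * (cocycle ψ R x s i : ℝ)

/-- The 1-form `v̂(x,s) = B(v, α(x,s))` for a bilinear form `B`. -/
def vhatB (ψ : Λ ≃* Multiplicative (Fin m → ℤ)) (R : RepSystem Λ)
    (B : (Fin m → ℝ) →ₗ[ℝ] (Fin m → ℝ) →ₗ[ℝ] ℝ) (v : Fin m → ℝ) : Γ → Γ → ℝ :=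
  fun x s => B v (fun i => (cocycle ψ R x s i : ℝ))

/-- The drift `ζ = (1/#F)·∑_{x∈Δ}∑_s μ(s)·α(x,s) ∈ ℝ^m`. -/
def drift (ψ : Λ ≃* Multiplicative (Fin m → ℤ)) (R : RepSystem Λ) (μ : Γ → ℝ) : Fin m → ℝ :=
  fun i => (Λ.index : ℝ)⁻¹ * ∑ x ∈ R.Δ, ∑' s : Γ, μ s * (cocycle ψ R x s i : ℝ)

/-- The covariance pairing `∑_{x,s} c(x,s)·u(x,s)·u'(x,s) − χ(u)·χ(u')`. -/
def cov (R : RepSystem Λ) (μ : Γ → ℝ) (u u' : Γ → Γ → ℝ) : ℝ :=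
  (∑ x ∈ R.Δ, ∑' s : Γ, μ s / (Λ.index : ℝ) * (u x s * u' x s)) - chi R μ u * chi R μ u'

/-- The transfer operator `ℒ_v` acting on functions `Δ → ℂ`. -/
def transferOp (ψ : Λ ≃* Multiplicative (Fin m → ℤ)) (R : RepSystem Λ) (μ : Γ → ℝ)
    (v : Fin m → ℝ) (f : Γ → ℂ) : Γ → ℂ :=
  fun x => ∑' s : Γ, (μ s : ℂ) *
    Complex.exp (2 * Real.pi * Complex.I * ((∑ i, v i * (cocycle ψ R x s i : ℝ)) : ℝ)) *
    f (R.rep (x * s))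

/-- The Gaussian density `ξ_A(w)` associated with a (positive-definite) matrix `A`. -/
def gauss {d : ℕ} (A : Matrix (Fin d) (Fin d) ℝ) (w : Fin d → ℝ) : ℝ :=
  (2 * Real.pi) ^ (-(d : ℝ) / 2) * A.det ^ (-(1 : ℝ) / 2) *
    Real.exp (-(w ⬝ᵥ A⁻¹.mulVec w) / 2)

/-- The product representative system for `Λ₁ × Λ₂ ≤ Γ₁ × Γ₂`. -/
def prodRep {Γ₁ : Type*} [Group Γ₁] {Γ₂ : Type*} [Group Γ₂]
    {Λ₁ : Subgroup Γ₁} {Λ₂ : Subgroup Γ₂}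
    (R₁ : RepSystem Λ₁) (R₂ : RepSystem Λ₂) : RepSystem (Λ₁.prod Λ₂) where
  Δ := R₁.Δ ×ˢ R₂.Δ
  one_mem := Finset.mem_product.mpr ⟨R₁.one_mem, R₂.one_mem⟩
  rep := fun p => (R₁.rep p.1, R₂.rep p.2)
  rep_mem := fun p => Finset.mem_product.mpr ⟨R₁.rep_mem p.1, R₂.rep_mem p.2⟩
  rep_spec := fun p => Subgroup.mem_prod.mpr ⟨R₁.rep_spec p.1, R₂.rep_spec p.2⟩
  rep_idem := fun x hx => by
    rcases Finset.mem_product.mp hx with ⟨h1, h2⟩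
    exact Prod.ext_iff.mpr ⟨R₁.rep_idem x.1 h1, R₂.rep_idem x.2 h2⟩
  rep_coset := fun p v hv => by
    rcases Subgroup.mem_prod.mp hv with ⟨h1, h2⟩
    exact Prod.ext_iff.mpr ⟨R₁.rep_coset p.1 v.1 h1, R₂.rep_coset p.2 v.2 h2⟩

/-- The 1-form `𝐯̂(x,s) = ⟨𝐯, α(x,s)⟩` on a product, standard inner product. -/
def vhat2 {Γ₁ : Type*} [Group Γ₁] {Γ₂ : Type*} [Group Γ₂]
    {Λ₁ : Subgroup Γ₁} {Λ₂ : Subgroup Γ₂} {m₁ m₂ : ℕ}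
    (ψ₁ : Λ₁ ≃* Multiplicative (Fin m₁ → ℤ)) (R₁ : RepSystem Λ₁)
    (ψ₂ : Λ₂ ≃* Multiplicative (Fin m₂ → ℤ)) (R₂ : RepSystem Λ₂)
    (v : (Fin m₁ → ℝ) × (Fin m₂ → ℝ)) : (Γ₁ × Γ₂) → (Γ₁ × Γ₂) → ℝ :=
  fun x s => (∑ i, v.1 i * (cocycle ψ₁ R₁ x.1 s.1 i : ℝ)) +
    ∑ i, v.2 i * (cocycle ψ₂ R₂ x.2 s.2 i : ℝ)

/-- The 1-form `𝐯̂(x,s) = ⟨𝐯, α(x,s)⟩` on a product, orthogonal-sum of the two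
bilinear forms `B₁`, `B₂`. -/
def vhatB2 {Γ₁ : Type*} [Group Γ₁] {Γ₂ : Type*} [Group Γ₂]
    {Λ₁ : Subgroup Γ₁} {Λ₂ : Subgroup Γ₂} {m₁ m₂ : ℕ}
    (ψ₁ : Λ₁ ≃* Multiplicative (Fin m₁ → ℤ)) (R₁ : RepSystem Λ₁)
    (B₁ : (Fin m₁ → ℝ) →ₗ[ℝ] (Fin m₁ → ℝ) →ₗ[ℝ] ℝ)
    (ψ₂ : Λ₂ ≃* Multiplicative (Fin m₂ → ℤ)) (R₂ : RepSystem Λ₂)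
    (B₂ : (Fin m₂ → ℝ) →ₗ[ℝ] (Fin m₂ → ℝ) →ₗ[ℝ] ℝ)
    (v : (Fin m₁ → ℝ) × (Fin m₂ → ℝ)) : (Γ₁ × Γ₂) → (Γ₁ × Γ₂) → ℝ :=
  fun x s => B₁ v.1 (fun i => (cocycle ψ₁ R₁ x.1 s.1 i : ℝ)) +
    B₂ v.2 (fun i => (cocycle ψ₂ R₂ x.2 s.2 i : ℝ))

end

section Convolution

variable {G : Type*} [Group G] {E : Type*} [NormedAddCommGroup E] [NormedSpace ℝ E]
  [CompleteSpace E]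

lemma hasSum_conv_smul {p q : G → ℝ} (hp₀ : ∀ g, 0 ≤ p g) (hp : Summable p)
    (hq₀ : ∀ g, 0 ≤ q g) (hq : Summable q) {F : G → E} {C : ℝ} (hF : ∀ g, ‖F g‖ ≤ C) :
    HasSum (fun g => conv p q g • F g) (∑' s, ∑' t, (p s * q t) • F (s * t)) := by
  have hpq : Summable fun x : G × G => p x.1 * q x.2 := hp.mul_of_nonneg hq hp₀ hq₀
  have hsum : Summable fun x : G × G => (p x.1 * q x.2) • F (x.1 * x.2) := by
    refine Summable.of_norm_bounded (hpq.mul_right C) fun x => ?_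
    rw [norm_smul, Real.norm_of_nonneg (mul_nonneg (hp₀ _) (hq₀ _))]
    exact mul_le_mul_of_nonneg_left (hF _) (mul_nonneg (hp₀ _) (hq₀ _))
  let e : G × G ≃ G × G :=
    ⟨fun x => (x.2, x.2⁻¹ * x.1), fun y => (y.1 * y.2, y.1), fun _ => by simp, fun _ => by simp⟩
  rw [← hsum.tsum_prod]
  refine ((e.hasSum_iff.mpr hsum.hasSum).prod_fiberwise fun g => ?_)
  simpa [e, conv] using (((e.summable_iff.mpr hpq).prod_factor g).hasSum.smul_const (F g))

lemma isProb_conv {p q : G → ℝ} (hp : IsProb p) (hq : IsProb q) : IsProb (conv p q) := by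
  refine ⟨fun g => tsum_nonneg fun s => mul_nonneg (hp.1 s) (hq.1 _), ?_⟩
  have h := hasSum_conv_smul hp.1 hp.2.summable hq.1 hq.2.summable (F := fun _ => (1 : ℝ))
    (C := 1) fun _ => norm_one.le
  simpa [tsum_mul_left, hp.2.tsum_eq, hq.2.tsum_eq] using h

lemma isProb_convPow {μ : G → ℝ} (hμ : IsProb μ) : ∀ n, IsProb (convPow μ n)
  | 0 => ⟨fun g => by by_cases hg : g = 1 <;> simp [convPow, hg], hasSum_ite_eq 1 1⟩
  | n + 1 => isProb_conv (isProb_convPow hμ n) hμ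

end Convolution

section Cocycle

variable {Γ : Type*} [Group Γ] {Λ : Subgroup Γ}

lemma RepSystem.rep_rep_mul (R : RepSystem Λ) (γ t : Γ) :
    R.rep (R.rep γ * t) = R.rep (γ * t) := by
  have h : γ * t = (γ * (R.rep γ)⁻¹) * (R.rep γ * t) := by group
  rw [h, R.rep_coset _ _ (R.rep_spec γ)]

variable {m : ℕ} (ψ : Λ ≃* Multiplicative (Fin m → ℤ)) (R : RepSystem Λ)

lemma cocycle_mul (x s t : Γ) :
    cocycle ψ R x (s * t) = cocycle ψ R x s + cocycle ψ R (R.rep (x * s)) t := by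
  rw [cocycle, cocycle, cocycle, ← toAdd_mul, ← map_mul]
  congr 2
  apply Subtype.ext
  simp only [Subgroup.coe_mul, R.rep_rep_mul, ← mul_assoc]
  group

lemma cocycle_one {x : Γ} (hx : R.rep x = x) : cocycle ψ R x 1 = 0 := by
  have h : (⟨x * 1 * (R.rep (x * 1))⁻¹, R.rep_spec (x * 1)⟩ : Λ) = 1 :=
    Subtype.ext (by simp [hx])
  rw [cocycle, h, map_one, toAdd_one]

lemma cocycle_one_left (s : Γ) : cocycle ψ R 1 s = Phi ψ R s := by
  simp only [cocycle, Phi, one_mul]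

lemma eq_of_Phi_eq_of_rep_eq {s γ : Γ} (hΦ : Phi ψ R s = Phi ψ R γ) (hrep : R.rep s = R.rep γ) :
    s = γ := by
  have h : s * (R.rep s)⁻¹ = γ * (R.rep γ)⁻¹ :=
    congrArg Subtype.val (ψ.injective (Multiplicative.toAdd.injective hΦ))
  rw [hrep, mul_left_inj] at h
  exact h

end Cocycle

section TorusCharacter

variable {ι : Type*} [Fintype ι]

noncomputable def torusChar (v : ι → ℝ) (k : ι → ℤ) : ℂ :=
  Complex.exp (2 * Real.pi * Complex.I * ((∑ i, v i * (k i : ℝ)) : ℝ))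

lemma torusChar_zero (v : ι → ℝ) : torusChar v 0 = 1 := by
  simp [torusChar]

lemma torusChar_add (v : ι → ℝ) (k l : ι → ℤ) :
    torusChar v (k + l) = torusChar v k * torusChar v l := by
  simp only [torusChar, ← Complex.exp_add, Pi.add_apply, Int.cast_add, mul_add,
    Finset.sum_add_distrib, Complex.ofReal_add]

lemma torusChar_sub (v : ι → ℝ) (k l : ι → ℤ) :
    torusChar v (k - l) = torusChar v k / torusChar v l :=
  eq_div_of_mul_eq (Complex.exp_ne_zero _) (by rw [← torusChar_add, sub_add_cancel])

lemma norm_torusChar (v : ι → ℝ) (k : ι → ℤ) : ‖torusChar v k‖ = 1 := by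
  rw [torusChar, Complex.norm_exp]
  simp

lemma norm_ofReal_mul_torusChar_mul {r : ℝ} (hr : 0 ≤ r) (v : ι → ℝ) (k : ι → ℤ) (z : ℂ) :
    ‖(r : ℂ) * torusChar v k * z‖ = r * ‖z‖ := by
  rw [norm_mul, norm_mul, norm_torusChar, mul_one, Complex.norm_real, Real.norm_of_nonneg hr]

lemma continuous_torusChar (k : ι → ℤ) : Continuous fun v => torusChar v k := by
  unfold torusChar
  fun_prop

lemma torusChar_eq_prod (v : ι → ℝ) (k : ι → ℤ) :
    torusChar v k = ∏ i, Complex.exp (2 * Real.pi * Complex.I * ((v i * k i : ℝ) : ℂ)) := by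
  rw [torusChar, ← Complex.exp_sum]
  push_cast
  rw [Finset.mul_sum]

lemma integral_Icc_exp_two_pi_I_mul_int (k : ℤ) :
    ∫ x in Set.Icc (-(1/2) : ℝ) (1/2), Complex.exp (2 * Real.pi * Complex.I * ((x * k : ℝ) : ℂ))
      = if k = 0 then 1 else 0 := by
  split_ifs with hk
  · simp [hk, Real.volume_real_Icc]
    norm_num
  · have hc : 2 * Real.pi * Complex.I * k ≠ 0 := by
      simp [Real.pi_ne_zero, Complex.I_ne_zero, hk]
    have hperiodic : Complex.exp (2 * Real.pi * Complex.I * k * ((1/2 : ℝ) : ℂ)) =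
        Complex.exp (2 * Real.pi * Complex.I * k * ((-(1/2) : ℝ) : ℂ)) :=
      Complex.exp_eq_exp_iff_exists_int.mpr ⟨k, by push_cast; ring⟩
    simp_rw [Complex.ofReal_mul, Complex.ofReal_intCast, mul_comm (_ : ℂ) (k : ℂ), ← mul_assoc]
    rw [integral_Icc_eq_integral_Ioc, ← intervalIntegral.integral_of_le (by norm_num),
      integral_exp_mul_complex hc, hperiodic, sub_self, zero_div]

lemma setIntegral_cube_torusChar (k : ι → ℤ) :
    ∫ v in Set.univ.pi (fun _ : ι => Set.Icc (-(1/2) : ℝ) (1/2)), torusChar v k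
      = if k = 0 then 1 else 0 := by
  simp_rw [torusChar_eq_prod, volume_pi, Measure.restrict_pi_pi,
    integral_fintype_prod_eq_prod
      (fun i x => Complex.exp (2 * Real.pi * Complex.I * ((x * k i : ℝ) : ℂ))),
    integral_Icc_exp_two_pi_I_mul_int, Finset.prod_boole, funext_iff]
  simp

lemma setIntegral_cube_tsum_mul_torusChar {κ : Type*} [Countable κ] {c : κ → ℂ}
    (hc : Summable fun s => ‖c s‖) (k : κ → ι → ℤ) :
    ∫ v in Set.univ.pi (fun _ : ι => Set.Icc (-(1/2) : ℝ) (1/2)), ∑' s, c s * torusChar v (k s)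
      = ∑' s, if k s = 0 then c s else 0 := by
  have hvol : volume.real (Set.univ.pi fun _ : ι => Set.Icc (-(1/2) : ℝ) (1/2)) = 1 := by
    simp [measureReal_def, Real.volume_Icc_pi]
    norm_num
  have hint (s : κ) : IntegrableOn (fun v => c s * torusChar v (k s))
      (Set.univ.pi fun _ : ι => Set.Icc (-(1/2) : ℝ) (1/2)) :=
    ((continuous_torusChar (k s)).const_mul (c s)).continuousOn.integrableOn_compact
      (isCompact_univ_pi fun _ => isCompact_Icc)
  rw [← integral_tsum_of_summable_integral_norm hint]
  · simp_rw [integral_const_mul, setIntegral_cube_torusChar, mul_ite, mul_one, mul_zero]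
  · simp_rw [norm_mul, norm_torusChar, mul_one, setIntegral_const, hvol, one_smul]
    exact hc

end TorusCharacter

section TransferOperator

variable {Γ : Type*} [Group Γ] {Λ : Subgroup Γ} {m : ℕ} (ψ : Λ ≃* Multiplicative (Fin m → ℤ))
  (R : RepSystem Λ) {μ : Γ → ℝ} (v : Fin m → ℝ)

lemma transferOp_apply (f : Γ → ℂ) (x : Γ) :
    transferOp ψ R μ v f x =
      ∑' s, (μ s : ℂ) * torusChar v (cocycle ψ R x s) * f (R.rep (x * s)) :=
  rfl

lemma norm_transferOp_le (hμ : IsProb μ) {f : Γ → ℂ} {C : ℝ} (hf : ∀ y, ‖f y‖ ≤ C) (x : Γ) :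
    ‖transferOp ψ R μ v f x‖ ≤ C := by
  rw [transferOp_apply]
  refine (tsum_of_norm_bounded (hμ.2.mul_right C) fun s => ?_).trans_eq (one_mul C)
  rw [norm_ofReal_mul_torusChar_mul (hμ.1 s)]
  exact mul_le_mul_of_nonneg_left (hf _) (hμ.1 s)

lemma transferOp_iterate_apply (hμ : IsProb μ) (n : ℕ) {f : Γ → ℂ} {C : ℝ}
    (hf : ∀ y, ‖f y‖ ≤ C) {x : Γ} (hx : R.rep x = x) :
    (transferOp ψ R μ v)^[n] f x =
      ∑' s, (convPow μ n s : ℂ) * torusChar v (cocycle ψ R x s) * f (R.rep (x * s)) := by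
  induction n generalizing f with
  | zero =>
    rw [Function.iterate_zero_apply, tsum_eq_single 1 fun s hs => by simp [convPow, hs]]
    simp [convPow, cocycle_one ψ R hx, torusChar_zero, hx]
  | succ n ih =>
    have hF (g : Γ) : ‖torusChar v (cocycle ψ R x g) * f (R.rep (x * g))‖ ≤ C := by
      rw [norm_mul, norm_torusChar, one_mul]
      exact hf _
    have hμn := isProb_convPow hμ n
    rw [Function.iterate_succ_apply, ih (norm_transferOp_le ψ R v hμ hf)]
    calc _ = ∑' s, ∑' t, (convPow μ n s * μ t) •
            (torusChar v (cocycle ψ R x (s * t)) * f (R.rep (x * (s * t)))) := by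
          refine tsum_congr fun s => ?_
          rw [transferOp_apply, ← tsum_mul_left]
          refine tsum_congr fun t => ?_
          rw [cocycle_mul, torusChar_add, R.rep_rep_mul, mul_assoc x, Complex.real_smul]
          push_cast
          ring
      _ = ∑' g, convPow μ (n + 1) g • (torusChar v (cocycle ψ R x g) * f (R.rep (x * g))) :=
          (hasSum_conv_smul hμn.1 hμn.2.summable hμ.1 hμ.2.summable hF).tsum_eq.symm
      _ = _ := by simp only [Complex.real_smul, mul_assoc]

end TransferOperator

theorem fourier_inversion_general
    {Γ : Type*} [Group Γ] [Countable Γ] {Λ : Subgroup Γ}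
    {m : ℕ} (ψ : Λ ≃* Multiplicative (Fin m → ℤ))
    (R : RepSystem Λ) (μ : Γ → ℝ) (hμ : IsProb μ) (n : ℕ) (γ : Γ) :
    (convPow μ n γ : ℂ) =
      ∫ v in Set.univ.pi (fun _ : Fin m => Set.Icc (-(1/2) : ℝ) (1/2)),
        (transferOp ψ R μ v)^[n] (fun y => if y = R.rep γ then 1 else 0) 1 *
          Complex.exp (-(2 * Real.pi * Complex.I *
            ((∑ i, v i * (Phi ψ R γ i : ℝ)) : ℝ))) := by
  set f : Γ → ℂ := fun y => if y = R.rep γ then 1 else 0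
  have hf (y : Γ) : ‖f y‖ ≤ 1 := by by_cases h : y = R.rep γ <;> simp [f, h]
  have hμn := isProb_convPow hμ n
  have hintegrand (v : Fin m → ℝ) :
      (transferOp ψ R μ v)^[n] f 1 *
          Complex.exp (-(2 * Real.pi * Complex.I * ((∑ i, v i * (Phi ψ R γ i : ℝ)) : ℝ))) =
        ∑' s, (convPow μ n s * f (R.rep s)) * torusChar v (Phi ψ R s - Phi ψ R γ) := by
    rw [transferOp_iterate_apply ψ R v hμ n hf (R.rep_idem 1 R.one_mem), Complex.exp_neg,
      ← tsum_mul_right]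
    refine tsum_congr fun s => ?_
    rw [cocycle_one_left, one_mul, torusChar_sub, div_eq_mul_inv]
    unfold torusChar
    ring
  have hsummable : Summable fun s => ‖(convPow μ n s : ℂ) * f (R.rep s)‖ := by
    refine hμn.2.summable.of_nonneg_of_le (fun _ => norm_nonneg _) fun s => ?_
    rw [norm_mul, Complex.norm_real, Real.norm_of_nonneg (hμn.1 s)]
    exact mul_le_of_le_one_right (hμn.1 s) (hf _)
  simp_rw [hintegrand]
  rw [setIntegral_cube_tsum_mul_torusChar hsummable, tsum_eq_single γ]
  · simp [f]
  · intro s hs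
    split_ifs with hΦ
    · have hrep : R.rep s ≠ R.rep γ := fun hrep =>
        hs (eq_of_Phi_eq_of_rep_eq ψ R (sub_eq_zero.mp hΦ) hrep)
      simp [f, hrep]
    · rfl

/-- Fourier inversion formula:
`μ_n(γ) = ∫_{[−1/2,1/2]^m} (ℒ_v^n 1_{x_γ})(id) e^{−2πi⟨v,Φ(γ)⟩} dv`. -/
theorem fourier_inversion
    {Γ : Type*} [Group Γ] [Countable Γ] {Λ : Subgroup Γ} (hN : Λ.Normal)
    (hI : Λ.index ≠ 0) {m : ℕ} (hm : 1 ≤ m) (ψ : Λ ≃* Multiplicative (Fin m → ℤ))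
    (R : RepSystem Λ) (μ : Γ → ℝ) (hμ : IsProb μ) (n : ℕ) (γ : Γ) :
    (convPow μ n γ : ℂ) =
      ∫ v in Set.univ.pi (fun _ : Fin m => Set.Icc (-(1/2) : ℝ) (1/2)),
        (transferOp ψ R μ v)^[n] (fun y => if y = R.rep γ then 1 else 0) 1 *
          Complex.exp (-(2 * Real.pi * Complex.I *
            ((∑ i, v i * (Phi ψ R γ i : ℝ)) : ℝ))) :=
  fourier_inversion_general ψ R μ hμ n γ

end NSVA
end

section
/- Let ν be a non-degenerate probability measure on Γ₁×Γ₂ with finite second moment, and let μ^{(1)}(γ₁) := ∑_{γ₂} ν(γ₁,γ₂) be its first marginal (which is non-degenerate on Γ₁). Let v₁ ∈ ℝ^{m₁} and set 𝐯₁ := (v₁, 0) ∈ ℝ^{m₁}×ℝ^{m₂}. If v̂₁ = u₁ + df₁ is a harmonic decomposition of the 1-form v̂₁(x₁,s₁) := ⟨v₁, α₁(x₁,s₁)⟩ with respect to (Γ₁, μ^{(1)}, Δ₁), then the 1-form 𝐯̂₁((x₁,x₂),(s₁,s₂)) := ⟨𝐯₁, α((x₁,x₂),(s₁,s₂))⟩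 admits the harmonic decomposition 𝐯̂₁ = 𝐮₁ + d𝐟₁ with respect to (Γ₁×Γ₂, ν, Δ₁×Δ₂), where 𝐮₁((x₁,x₂),(s₁,s₂)) := u₁(x₁,s₁) and 𝐟₁(x₁,x₂) := f₁(x₁); in particular 𝐮₁ is harmonic and is the harmonic part of 𝐯̂₁. -/
open scoped BigOperators Classical
open Filter Matrix MeasureTheory

namespace NSVA

/-!
A function of the first coordinate integrates against `ν` exactly as it does against the
first marginal `μ⁽¹⁾`. Hence the lift `𝐮₁` of `u₁` is square-integrable, has the same
mean increments `∑ₛ ν(s) 𝐮₁(x, s) = ∑ₛ₁ μ⁽¹⁾(s₁) u₁(x₁, s₁)`, and, because `#Δ₂` equals the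
index of `Λ₂` and cancels, the same `χ`: so `𝐮₁` is harmonic. Since `𝐯₁ = (v₁, 0)`, the form
`𝐯̂₁` is the lift of `v̂₁`, and the decomposition `v̂₁ = u₁ + df₁` lifts pointwise.
-/

section Marginal

variable {G₁ G₂ : Type*} {ν : G₁ × G₂ → ℝ}

lemma marg1_nonneg (hν : 0 ≤ ν) (a : G₁) : 0 ≤ marg1 ν a :=
  tsum_nonneg fun b => hν (a, b)

lemma le_marg1 (hν : 0 ≤ ν) (hs : Summable ν) (a : G₁) (b : G₂) : ν (a, b) ≤ marg1 ν a :=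
  (hs.prod_factor a).le_tsum b fun b' _ => hν (a, b')

lemma summable_marg1 (hν : 0 ≤ ν) (hs : Summable ν) : Summable (marg1 ν) :=
  ((summable_prod_of_nonneg hν).mp hs).2

lemma summable_mul_comp_fst (hν : 0 ≤ ν) (hs : Summable ν) {g : G₁ → ℝ}
    (hg : Summable fun a => marg1 ν a * g a) :
    Summable fun s : G₁ × G₂ => ν s * g s.1 := by
  refine Summable.of_abs ?_
  have habs : (fun s : G₁ × G₂ => |ν s * g s.1|) = fun s => ν s * |g s.1| := by
    funext s
    rw [abs_mul, abs_of_nonneg (hν s)]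
  rw [habs, summable_prod_of_nonneg fun s => mul_nonneg (hν s) (abs_nonneg _)]
  refine ⟨fun a => (hs.prod_factor a).mul_right |g a|, hg.abs.congr fun a => ?_⟩
  show _ = ∑' b, ν (a, b) * |g a|
  rw [tsum_mul_right, abs_mul, abs_of_nonneg (marg1_nonneg hν a), marg1]

lemma tsum_mul_comp_fst (hν : 0 ≤ ν) (hs : Summable ν) {g : G₁ → ℝ}
    (hg : Summable fun a => marg1 ν a * g a) :
    ∑' s : G₁ × G₂, ν s * g s.1 = ∑' a, marg1 ν a * g a := by
  rw [(summable_mul_comp_fst hν hs hg).tsum_prod]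
  exact tsum_congr fun a => (tsum_mul_right : ∑' b, ν (a, b) * g a = _)

end Marginal

lemma summable_mul_of_summable_mul_sq {α : Type*} {μ w : α → ℝ} (hμ : 0 ≤ μ)
    (hs : Summable μ) (hsq : Summable fun a => μ a * w a ^ 2) :
    Summable fun a => μ a * w a := by
  refine Summable.of_norm_bounded ((hs.add hsq).div_const 2) fun a => ?_
  have hw : |w a| ≤ (1 + w a ^ 2) / 2 := by nlinarith [sq_nonneg (|w a| - 1), sq_abs (w a)]
  calc ‖μ a * w a‖ = μ a * |w a| := by rw [Real.norm_eq_abs, abs_mul, abs_of_nonneg (hμ a)]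
    _ ≤ μ a * ((1 + w a ^ 2) / 2) := mul_le_mul_of_nonneg_left hw (hμ a)
    _ = (μ a + μ a * w a ^ 2) / 2 := by ring

lemma Nondeg.of_surjective {G H : Type*} [Group G] [Group H] {ν : G → ℝ} {μ : H → ℝ}
    (hν : Nondeg ν) (φ : G →* H) (hφ : Function.Surjective φ)
    (hpos : ∀ g, 0 < ν g → 0 < μ (φ g)) : Nondeg μ := by
  intro h
  obtain ⟨g, rfl⟩ := hφ h
  have hle : Subsemigroup.closure {x | 0 < ν x} ≤
      (Subsemigroup.closure {y | 0 < μ y}).comap φ.toMulHom :=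
    Subsemigroup.closure_le.mpr fun x hx => Subsemigroup.subset_closure (hpos x hx)
  exact hle (hν g)

lemma Nondeg.marg1 {G₁ G₂ : Type*} [Group G₁] [Group G₂] {ν : G₁ × G₂ → ℝ}
    (hnd : Nondeg ν) (hν : 0 ≤ ν) (hs : Summable ν) : Nondeg (marg1 ν) :=
  hnd.of_surjective (MonoidHom.fst G₁ G₂) Prod.fst_surjective fun g hg =>
    hg.trans_le (le_marg1 hν hs g.1 g.2)

namespace RepSystem

variable {G : Type*} [Group G] {Λ : Subgroup G}

lemma card_eq_index (R : RepSystem Λ) : R.Δ.card = Λ.index := by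
  let e : R.Δ → Quotient (QuotientGroup.rightRel Λ) := fun x => Quotient.mk _ x
  have hinj : Function.Injective e := by
    rintro ⟨x, hx⟩ ⟨y, hy⟩ h
    have hcoset := R.rep_coset x _ (QuotientGroup.rightRel_apply.mp (Quotient.exact h))
    rw [inv_mul_cancel_right, R.rep_idem y hy, R.rep_idem x hx] at hcoset
    exact Subtype.ext hcoset.symm
  have hsurj : Function.Surjective e := by
    rintro ⟨γ⟩
    exact ⟨⟨R.rep γ, R.rep_mem γ⟩,
      Quotient.sound (QuotientGroup.rightRel_apply.mpr (R.rep_spec γ))⟩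
  rw [Subgroup.index, ← Nat.card_congr (QuotientGroup.quotientRightRelEquivQuotientLeftRel Λ),
    ← Nat.card_congr (Equiv.ofBijective e ⟨hinj, hsurj⟩), Nat.card_eq_finsetCard]

lemma index_ne_zero (R : RepSystem Λ) : Λ.index ≠ 0 :=
  R.card_eq_index ▸ Finset.card_ne_zero_of_mem R.one_mem

end RepSystem

section OneForms

variable {G : Type*} [Group G] {Λ : Subgroup G} (R : RepSystem Λ) {μ : G → ℝ} {ω : G → G → ℝ}

lemma sqInt_iff : SqInt R μ ω ↔ ∀ x ∈ R.Δ, Summable fun s => μ s * ω x s ^ 2 := by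
  have hI : (Λ.index : ℝ) ≠ 0 := Nat.cast_ne_zero.mpr R.index_ne_zero
  simp only [SqInt, div_mul_eq_mul_div]
  exact forall₂_congr fun x _ => summable_div_const_iff hI

lemma chi_eq : chi R μ ω = (Λ.index : ℝ)⁻¹ * ∑ x ∈ R.Δ, ∑' s, μ s * ω x s := by
  simp only [chi, div_eq_inv_mul, mul_assoc, tsum_mul_left, Finset.mul_sum]

end OneForms

section ProductLift

variable {Γ₁ Γ₂ : Type*} [Group Γ₁] [Group Γ₂] {Λ₁ : Subgroup Γ₁} {Λ₂ : Subgroup Γ₂}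
  (R₁ : RepSystem Λ₁) (R₂ : RepSystem Λ₂) {ν : Γ₁ × Γ₂ → ℝ}

lemma isOneForm_prodRep_comp_fst {u : Γ₁ → Γ₁ → ℝ} (hu : IsOneForm R₁ u) :
    IsOneForm (prodRep R₁ R₂) (fun x s => u x.1 s.1) :=
  fun x hx s => hu x.1 (Finset.mem_product.mp hx).1 s.1

lemma sqInt_prodRep_comp_fst (hν : 0 ≤ ν) (hs : Summable ν) {u : Γ₁ → Γ₁ → ℝ}
    (hu : SqInt R₁ (marg1 ν) u) : SqInt (prodRep R₁ R₂) ν (fun x s => u x.1 s.1) := by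
  rw [sqInt_iff] at hu ⊢
  exact fun x hx => summable_mul_comp_fst hν hs (hu x.1 (Finset.mem_product.mp hx).1)

lemma chi_prodRep_comp_fst (hν : 0 ≤ ν) (hs : Summable ν) {u : Γ₁ → Γ₁ → ℝ}
    (hu : ∀ x ∈ R₁.Δ, Summable fun a => marg1 ν a * u x a) :
    chi (prodRep R₁ R₂) ν (fun x s => u x.1 s.1) = chi R₁ (marg1 ν) u := by
  have hfib : ∀ x ∈ (prodRep R₁ R₂).Δ,
      ∑' s, ν s * u x.1 s.1 = ∑' a, marg1 ν a * u x.1 a :=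
    fun x hx => tsum_mul_comp_fst hν hs (hu x.1 (Finset.mem_product.mp hx).1)
  have hI₂ : (Λ₂.index : ℝ) ≠ 0 := Nat.cast_ne_zero.mpr R₂.index_ne_zero
  rw [chi_eq, chi_eq, Finset.sum_congr rfl hfib]
  simp only [prodRep, Finset.sum_product, Finset.sum_const, nsmul_eq_mul, R₂.card_eq_index,
    Subgroup.index_prod, Nat.cast_mul, ← Finset.mul_sum]
  field_simp

lemma harmonic_prodRep_comp_fst (hν : 0 ≤ ν) (hs : Summable ν) {u : Γ₁ → Γ₁ → ℝ}
    (hu : Harmonic R₁ (marg1 ν) u) : Harmonic (prodRep R₁ R₂) ν (fun x s => u x.1 s.1) := by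
  obtain ⟨hsq, hmean⟩ := hu
  have hint : ∀ x ∈ R₁.Δ, Summable fun a => marg1 ν a * u x a := fun x hx =>
    summable_mul_of_summable_mul_sq (marg1_nonneg hν) (summable_marg1 hν hs)
      ((sqInt_iff R₁).mp hsq x hx)
  refine ⟨sqInt_prodRep_comp_fst R₁ R₂ hν hs hsq, fun x hx => ?_⟩
  have hx₁ := (Finset.mem_product.mp hx).1
  rw [chi_prodRep_comp_fst R₁ R₂ hν hs hint, tsum_mul_comp_fst hν hs (hint x.1 hx₁)]
  exact hmean x.1 hx₁

lemma isHarmDecomp_prodRep_comp_fst (hν : 0 ≤ ν) (hs : Summable ν)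
    {ω u : Γ₁ → Γ₁ → ℝ} {f : Γ₁ → ℝ} (h : IsHarmDecomp R₁ (marg1 ν) ω u f) :
    IsHarmDecomp (prodRep R₁ R₂) ν (fun x s => ω x.1 s.1) (fun x s => u x.1 s.1)
      (fun x => f x.1) :=
  ⟨isOneForm_prodRep_comp_fst R₁ R₂ h.1, harmonic_prodRep_comp_fst R₁ R₂ hν hs h.2.1,
    fun x hx s => h.2.2 x.1 (Finset.mem_product.mp hx).1 s.1⟩

lemma vhat2_zero_right {m₁ m₂ : ℕ} (ψ₁ : Λ₁ ≃* Multiplicative (Fin m₁ → ℤ))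
    (ψ₂ : Λ₂ ≃* Multiplicative (Fin m₂ → ℤ)) (v₁ : Fin m₁ → ℝ) :
    vhat2 ψ₁ R₁ ψ₂ R₂ (v₁, 0) = fun x s => vhat ψ₁ R₁ v₁ x.1 s.1 := by
  funext x s
  simp [vhat2, vhat]

end ProductLift

theorem harmonic_part_of_product_lift_general
    {Γ₁ : Type*} [Group Γ₁] {Γ₂ : Type*} [Group Γ₂]
    {Λ₁ : Subgroup Γ₁} {Λ₂ : Subgroup Γ₂}
    {m₁ m₂ : ℕ}
    (ψ₁ : Λ₁ ≃* Multiplicative (Fin m₁ → ℤ)) (ψ₂ : Λ₂ ≃* Multiplicative (Fin m₂ → ℤ))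
    (R₁ : RepSystem Λ₁) (R₂ : RepSystem Λ₂)
    (ν : Γ₁ × Γ₂ → ℝ) (hν : IsProb ν) (hnd : Nondeg ν)
    (v₁ : Fin m₁ → ℝ) (u₁ : Γ₁ → Γ₁ → ℝ) (f₁ : Γ₁ → ℝ)
    (hdec : IsHarmDecomp R₁ (marg1 ν) (vhat ψ₁ R₁ v₁) u₁ f₁) :
    Nondeg (marg1 ν) ∧
    IsHarmDecomp (prodRep R₁ R₂) ν (vhat2 ψ₁ R₁ ψ₂ R₂ (v₁, 0))
      (fun x s => u₁ x.1 s.1) (fun x => f₁ x.1) := by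
  obtain ⟨hν₀, hν₁⟩ := hν
  refine ⟨hnd.marg1 hν₀ hν₁.summable, ?_⟩
  rw [vhat2_zero_right]
  exact isHarmDecomp_prodRep_comp_fst R₁ R₂ hν₀ hν₁.summable hdec

/-- The harmonic decomposition of `v̂₁` with respect to the first
marginal lifts to a harmonic decomposition of `(v₁,0)^` on the product diagram. -/
theorem harmonic_part_of_product_lift
    {Γ₁ : Type*} [Group Γ₁] [Countable Γ₁] {Γ₂ : Type*} [Group Γ₂] [Countable Γ₂]
    {Λ₁ : Subgroup Γ₁} {Λ₂ : Subgroup Γ₂} (hN₁ : Λ₁.Normal) (hN₂ : Λ₂.Normal)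
    (hI₁ : Λ₁.index ≠ 0) (hI₂ : Λ₂.index ≠ 0)
    {m₁ m₂ : ℕ} (hm₁ : 1 ≤ m₁) (hm₂ : 1 ≤ m₂)
    (ψ₁ : Λ₁ ≃* Multiplicative (Fin m₁ → ℤ)) (ψ₂ : Λ₂ ≃* Multiplicative (Fin m₂ → ℤ))
    (R₁ : RepSystem Λ₁) (R₂ : RepSystem Λ₂)
    (ν : Γ₁ × Γ₂ → ℝ) (hν : IsProb ν) (hnd : Nondeg ν) (hmom : FinSecondMoment ν)
    (v₁ : Fin m₁ → ℝ) (u₁ : Γ₁ → Γ₁ → ℝ) (f₁ : Γ₁ → ℝ)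
    (hdec : IsHarmDecomp R₁ (marg1 ν) (vhat ψ₁ R₁ v₁) u₁ f₁) :
    Nondeg (marg1 ν) ∧
    IsHarmDecomp (prodRep R₁ R₂) ν (vhat2 ψ₁ R₁ ψ₂ R₂ (v₁, 0))
      (fun x s => u₁ x.1 s.1) (fun x => f₁ x.1) :=
  harmonic_part_of_product_lift_general ψ₁ ψ₂ R₁ R₂ ν hν hnd v₁ u₁ f₁ hdec

end NSVA
end

section
/- Let d ≥ 1 and let Σ and Σ' be symmetric positive-definite d×d real matrices. Then lim_{n→∞} ∑_{w∈ℤ^d} |ξ_{nΣ}(w) − ξ_{nΣ'}(w)| = ∫_{ℝ^d} |ξ_Σ(w) − ξ_{Σ'}(w)| dw, where the integral is with respect to Lebesgue measure on ℝ^d. -/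
/-!
Since `ξ_{nΣ}(w) = n^{-d/2} ξ_Σ(w / √n)`, the `ℓ¹` sum at time `n` is the Riemann sum of
`F = |ξ_Σ - ξ_{Σ'}|` over the grid `n^{-1/2} ℤ^d`, i.e. the integral of `F` composed with rounding
down to that grid. Rounding moves each coordinate by at most `1`, so the Gaussian decay of `F`
survives it up to constants and yields one integrable majorant for all `n`; dominated convergence
and the continuity of `F` then give the limit `∫ F`.
-/

open scoped BigOperators Classical
open Filter Matrix MeasureTheory

namespace NSVA

open Topology

open scoped MatrixOrder in
theorem _root_.Matrix.PosDef.exists_pos_mul_dotProduct_self_le {n : Type*} [Fintype n]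
    [DecidableEq n] {M : Matrix n n ℝ} (hM : M.PosDef) :
    ∃ c > 0, ∀ x : n → ℝ, c * (x ⬝ᵥ x) ≤ x ⬝ᵥ M *ᵥ x := by
  -- the spectral bound below needs the matrix algebra to be nontrivial
  cases isEmpty_or_nonempty n
  · exact ⟨1, one_pos, fun x => by simp [dotProduct]⟩
  obtain ⟨c, hc, hle⟩ := (CFC.exists_pos_algebraMap_le_iff hM.isHermitian.isSelfAdjoint).2
    fun _ hx => hM.isStrictlyPositive.spectrum_pos hx
  refine ⟨c, hc, fun x => ?_⟩
  have := (Matrix.le_iff.mp hle).dotProduct_mulVec_nonneg x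
  simpa [sub_mulVec, Algebra.algebraMap_eq_smul_one, smul_mulVec, dotProduct_smul] using this

noncomputable section

def gridFloor {ι : Type*} (c : ℝ) (y : ι → ℝ) : ι → ℝ := c⁻¹ • fun i => (⌊c * y i⌋ : ℝ)

def HasGaussianDecay {ι : Type*} [Fintype ι] (F : (ι → ℝ) → ℝ) : Prop :=
  ∃ C a : ℝ, 0 < a ∧ ∀ x, |F x| ≤ C * Real.exp (-(a * ∑ i, x i ^ 2))

end

section gridFloor

variable {ι : Type*}

theorem gridFloor_sub_self_eq (c : ℝ) (hc : c ≠ 0) (y : ι → ℝ) (i : ι) :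
    gridFloor c y i - y i = -(c⁻¹ * Int.fract (c * y i)) := by
  simp only [gridFloor, Pi.smul_apply, smul_eq_mul, Int.fract]
  field_simp
  ring

theorem abs_gridFloor_sub_le {c : ℝ} (hc : 0 < c) (y : ι → ℝ) (i : ι) :
    |gridFloor c y i - y i| ≤ c⁻¹ := by
  rw [gridFloor_sub_self_eq c hc.ne', abs_neg, abs_mul, abs_inv, abs_of_pos hc, Int.abs_fract]
  exact mul_le_of_le_one_right (inv_nonneg.2 hc.le) (Int.fract_lt_one _).le

theorem measurable_gridFloor [Fintype ι] (c : ℝ) : Measurable (gridFloor (ι := ι) c) := by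
  unfold gridFloor
  fun_prop

theorem tendsto_gridFloor {α : Type*} {l : Filter α} {c : α → ℝ} (hc : Tendsto c l atTop)
    (y : ι → ℝ) : Tendsto (fun n => gridFloor (c n) y) l (𝓝 y) := by
  refine tendsto_pi_nhds.2 fun i => tendsto_iff_dist_tendsto_zero.2 ?_
  refine squeeze_zero' (Eventually.of_forall fun _ => dist_nonneg) ?_
    (tendsto_inv_atTop_zero.comp hc)
  filter_upwards [hc.eventually_gt_atTop 0] with n hn
  exact abs_gridFloor_sub_le hn y i

theorem volume_preimage_floor_mul [Fintype ι] {c : ℝ} (hc : 0 < c) (w : ι → ℤ) :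
    volume ((fun y : ι → ℝ => fun i => ⌊c * y i⌋) ⁻¹' {w}) =
      ENNReal.ofReal c⁻¹ ^ Fintype.card ι := by
  have hcell : (fun y : ι → ℝ => fun i => ⌊c * y i⌋) ⁻¹' {w} =
      Set.univ.pi fun i => Set.Ico ((w i : ℝ) / c) ((w i + 1) / c) := by
    ext y
    simp only [Set.mem_preimage, Set.mem_singleton_iff, funext_iff, Set.mem_pi, Set.mem_univ,
      true_imp_iff, Set.mem_Ico, Int.floor_eq_iff, div_le_iff₀ hc, lt_div_iff₀ hc, mul_comm c]
  rw [hcell, volume_pi_pi]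
  simp only [Real.volume_Ico, ← sub_div, add_sub_cancel_left, one_div, Finset.prod_const,
    Finset.card_univ]

theorem tsum_eq_integral_comp_gridFloor [Fintype ι] {F : (ι → ℝ) → ℝ} {c : ℝ} (hc : 0 < c)
    (hF : Integrable fun y => F (gridFloor c y)) :
    ∑' w : ι → ℤ, c⁻¹ ^ Fintype.card ι * F (c⁻¹ • fun i => (w i : ℝ)) =
      ∫ y, F (gridFloor c y) := by
  set cell : (ι → ℤ) → Set (ι → ℝ) := fun w => (fun y i => ⌊c * y i⌋) ⁻¹' {w}
  have hmeas : ∀ w, MeasurableSet (cell w) := fun w =>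
    (by fun_prop : Measurable fun (y : ι → ℝ) i => ⌊c * y i⌋) (measurableSet_singleton w)
  have hdisj : Pairwise (Function.onFun Disjoint cell) := fun w w' hne =>
    (Set.disjoint_singleton.2 hne).preimage _
  have hunion : ⋃ w, cell w = Set.univ :=
    Set.iUnion_eq_univ_iff.2 fun y => ⟨_, rfl⟩
  have hcell : ∀ w, ∫ y in cell w, F (gridFloor c y) =
      c⁻¹ ^ Fintype.card ι * F (c⁻¹ • fun i => (w i : ℝ)) := by
    intro w
    have hconst : Set.EqOn (fun y => F (gridFloor c y))
        (fun _ => F (c⁻¹ • fun i => (w i : ℝ))) (cell w) := by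
      rintro y (rfl : (fun i => ⌊c * y i⌋) = w)
      rfl
    rw [setIntegral_congr_fun (hmeas w) hconst, setIntegral_const, measureReal_def,
      volume_preimage_floor_mul hc, ENNReal.toReal_pow, ENNReal.toReal_ofReal (inv_nonneg.2 hc.le),
      smul_eq_mul]
  have hsum := hasSum_integral_iUnion hmeas hdisj (by rw [hunion]; exact hF.integrableOn)
  rw [hunion, Measure.restrict_univ] at hsum
  simpa only [hcell] using hsum.tsum_eq

end gridFloor

theorem half_sq_sub_one_le_sq {u v : ℝ} (h : |u - v| ≤ 1) : v ^ 2 / 2 - 1 ≤ u ^ 2 := by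
  have := (sq_le_one_iff_abs_le_one _).2 h
  nlinarith [sq_nonneg (2 * u - v)]

theorem integrable_exp_neg_mul_sum_sq {ι : Type*} [Fintype ι] {a : ℝ} (ha : 0 < a) :
    Integrable fun x : ι → ℝ => Real.exp (-(a * ∑ i, x i ^ 2)) := by
  simp_rw [Finset.mul_sum, ← Finset.sum_neg_distrib, Real.exp_sum, ← neg_mul]
  exact Integrable.fintype_prod fun _ => integrable_exp_neg_mul_sq ha

namespace HasGaussianDecay

variable {ι : Type*} [Fintype ι] {F G : (ι → ℝ) → ℝ}

theorem sub (hF : HasGaussianDecay F) (hG : HasGaussianDecay G) :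
    HasGaussianDecay fun x => F x - G x := by
  obtain ⟨C, a, ha, hFa⟩ := hF
  obtain ⟨C', a', ha', hGa'⟩ := hG
  refine ⟨C + C', min a a', lt_min ha ha', fun x => ?_⟩
  have hC : 0 ≤ C := by simpa using (abs_nonneg _).trans (hFa 0)
  have hC' : 0 ≤ C' := by simpa using (abs_nonneg _).trans (hGa' 0)
  have hexp : ∀ b ≥ min a a', Real.exp (-(b * ∑ i, x i ^ 2)) ≤
      Real.exp (-(min a a' * ∑ i, x i ^ 2)) := fun b hb => by
    gcongr
  calc |F x - G x| ≤ |F x| + |G x| := abs_sub _ _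
    _ ≤ C * Real.exp (-(a * ∑ i, x i ^ 2)) + C' * Real.exp (-(a' * ∑ i, x i ^ 2)) :=
      add_le_add (hFa x) (hGa' x)
    _ ≤ (C + C') * Real.exp (-(min a a' * ∑ i, x i ^ 2)) := by
      rw [add_mul]
      exact add_le_add (mul_le_mul_of_nonneg_left (hexp a (min_le_left _ _)) hC)
        (mul_le_mul_of_nonneg_left (hexp a' (min_le_right _ _)) hC')

theorem abs (hF : HasGaussianDecay F) : HasGaussianDecay fun x => |F x| := by
  simpa only [HasGaussianDecay, abs_abs] using hF

theorem exists_integrable_bound_comp_gridFloor (hF : HasGaussianDecay F) :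
    ∃ D : (ι → ℝ) → ℝ, Integrable D ∧ ∀ c ≥ 1, ∀ y, |F (gridFloor c y)| ≤ D y := by
  obtain ⟨C, a, ha, hFa⟩ := hF
  have hC : 0 ≤ C := by simpa using (abs_nonneg _).trans (hFa 0)
  refine ⟨fun y => C * Real.exp (a * Fintype.card ι) * Real.exp (-(a / 2 * ∑ i, y i ^ 2)),
    (integrable_exp_neg_mul_sum_sq (half_pos ha)).const_mul _, fun c hc y => ?_⟩
  have hcoord : ∀ i, y i ^ 2 / 2 - 1 ≤ gridFloor c y i ^ 2 := fun i =>
    half_sq_sub_one_le_sq <|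
      (abs_gridFloor_sub_le (by positivity) y i).trans (inv_le_one_of_one_le₀ hc)
  have hsum : (∑ i, y i ^ 2) / 2 - Fintype.card ι ≤ ∑ i, gridFloor c y i ^ 2 :=
    calc (∑ i, y i ^ 2) / 2 - Fintype.card ι = ∑ i, (y i ^ 2 / 2 - 1) := by
          simp [Finset.sum_sub_distrib, Finset.sum_div]
      _ ≤ _ := Finset.sum_le_sum fun i _ => hcoord i
  calc |F (gridFloor c y)| ≤ C * Real.exp (-(a * ∑ i, gridFloor c y i ^ 2)) := hFa _
    _ ≤ C * Real.exp (-(a * ((∑ i, y i ^ 2) / 2 - Fintype.card ι))) := by gcongr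
    _ = C * Real.exp (a * Fintype.card ι) * Real.exp (-(a / 2 * ∑ i, y i ^ 2)) := by
      rw [mul_assoc, ← Real.exp_add]
      ring_nf

theorem integrable_comp_gridFloor (hF : HasGaussianDecay F) (hm : Measurable F) {c : ℝ}
    (hc : 1 ≤ c) : Integrable fun y => F (gridFloor c y) := by
  obtain ⟨D, hD, hFD⟩ := hF.exists_integrable_bound_comp_gridFloor
  exact hD.mono' (hm.comp (measurable_gridFloor c)).aestronglyMeasurable
    (Eventually.of_forall (hFD c hc))

theorem tendsto_integral_comp_gridFloor (hF : HasGaussianDecay F) (hcont : Continuous F)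
    {α : Type*} {l : Filter α} [l.IsCountablyGenerated] {c : α → ℝ} (hc : Tendsto c l atTop) :
    Tendsto (fun n => ∫ y, F (gridFloor (c n) y)) l (𝓝 (∫ y, F y)) := by
  obtain ⟨D, hD, hFD⟩ := hF.exists_integrable_bound_comp_gridFloor
  refine tendsto_integral_filter_of_dominated_convergence D
    (Eventually.of_forall fun n =>
      (hcont.measurable.comp (measurable_gridFloor (c n))).aestronglyMeasurable) ?_ hD
    (Eventually.of_forall fun y => (hcont.tendsto y).comp (tendsto_gridFloor hc y))
  filter_upwards [hc.eventually_ge_atTop 1] with n hn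
  exact Eventually.of_forall (hFD (c n) hn)

end HasGaussianDecay

theorem gauss_pos {d : ℕ} {A : Matrix (Fin d) (Fin d) ℝ} (hA : 0 < A.det) (w : Fin d → ℝ) :
    0 < gauss A w := by
  unfold gauss
  positivity

theorem continuous_gauss {d : ℕ} (A : Matrix (Fin d) (Fin d) ℝ) : Continuous (gauss A) := by
  unfold gauss
  fun_prop

theorem hasGaussianDecay_gauss {d : ℕ} {A : Matrix (Fin d) (Fin d) ℝ} (hA : A.PosDef) :
    HasGaussianDecay (gauss A) := by
  obtain ⟨c, hc, hquad⟩ := hA.inv.exists_pos_mul_dotProduct_self_le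
  refine ⟨(2 * Real.pi) ^ (-(d : ℝ) / 2) * A.det ^ (-(1 : ℝ) / 2), c / 2, half_pos hc,
    fun x => ?_⟩
  rw [abs_of_pos (gauss_pos hA.det_pos x), gauss]
  have : c * ∑ i, x i ^ 2 ≤ x ⬝ᵥ A⁻¹ *ᵥ x := by simpa [dotProduct, sq] using hquad x
  have := hA.det_pos
  exact mul_le_mul_of_nonneg_left (Real.exp_le_exp.2 (by linarith)) (by positivity)

theorem gauss_smul {d : ℕ} {A : Matrix (Fin d) (Fin d) ℝ} (hA : 0 < A.det) {t : ℝ} (ht : 0 < t)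
    (x : Fin d → ℝ) :
    gauss (t • A) x = (√t)⁻¹ ^ d * gauss A ((√t)⁻¹ • x) := by
  have hinv : (t • A)⁻¹ = t⁻¹ • A⁻¹ := by
    have := invertibleOfNonzero ht.ne'
    rw [inv_smul A t hA.ne'.isUnit, invOf_eq_inv]
  have hquad : x ⬝ᵥ (t • A)⁻¹ *ᵥ x = ((√t)⁻¹ • x) ⬝ᵥ A⁻¹ *ᵥ ((√t)⁻¹ • x) := by
    simp only [hinv, smul_mulVec, mulVec_smul, dotProduct_smul, smul_dotProduct, smul_eq_mul]
    rw [← mul_assoc, ← mul_inv, Real.mul_self_sqrt ht.le]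
  have hdet : (t • A).det ^ (-(1 : ℝ) / 2) = (√t)⁻¹ ^ d * A.det ^ (-(1 : ℝ) / 2) := by
    rw [det_smul, Fintype.card_fin, Real.mul_rpow (by positivity) hA.le, Real.sqrt_eq_rpow,
      ← Real.rpow_neg_one, ← Real.rpow_mul ht.le, ← Real.rpow_natCast, ← Real.rpow_natCast,
      ← Real.rpow_mul ht.le, ← Real.rpow_mul ht.le]
    ring_nf
  rw [gauss, gauss, hquad, hdet]
  ring

theorem gaussian_l1_limit_general
    {d : ℕ} (Sig Sig' : Matrix (Fin d) (Fin d) ℝ)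
    (hp : Sig.PosDef) (hp' : Sig'.PosDef) :
    Tendsto (fun n : ℕ =>
        ∑' w : Fin d → ℤ,
          |gauss ((n : ℝ) • Sig) (fun i => (w i : ℝ)) -
            gauss ((n : ℝ) • Sig') (fun i => (w i : ℝ))|)
      atTop
      (nhds (∫ w : Fin d → ℝ, |gauss Sig w - gauss Sig' w|)) := by
  set F : (Fin d → ℝ) → ℝ := fun y => |gauss Sig y - gauss Sig' y|
  have hdecay : HasGaussianDecay F :=
    ((hasGaussianDecay_gauss hp).sub (hasGaussianDecay_gauss hp')).abs
  have hcont : Continuous F := ((continuous_gauss Sig).sub (continuous_gauss Sig')).abs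
  have hsqrt : Tendsto (fun n : ℕ => √(n : ℝ)) atTop atTop :=
    Real.tendsto_sqrt_atTop.comp tendsto_natCast_atTop_atTop
  refine (hdecay.tendsto_integral_comp_gridFloor hcont hsqrt).congr' ?_
  filter_upwards [eventually_ge_atTop 1] with n hn
  have hn_real : (1 : ℝ) ≤ n := by exact_mod_cast hn
  refine (tsum_eq_integral_comp_gridFloor (by positivity)
    (hdecay.integrable_comp_gridFloor hcont.measurable (Real.one_le_sqrt.2 hn_real))).symm.trans
    (tsum_congr fun w => ?_)
  rw [gauss_smul hp.det_pos (by positivity), gauss_smul hp'.det_pos (by positivity), ← mul_sub,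
    abs_mul, abs_of_nonneg (by positivity), Fintype.card_fin]

/-- The `ℓ¹(ℤ^d)` distance between the Gaussian densities `ξ_{nΣ}` and
`ξ_{nΣ'}` converges, as `n → ∞`, to the `L¹(ℝ^d)` distance between `ξ_Σ` and `ξ_{Σ'}`. -/
theorem gaussian_l1_limit
    {d : ℕ} (hd : 1 ≤ d) (Sig Sig' : Matrix (Fin d) (Fin d) ℝ)
    (hs : Sig.IsSymm) (hs' : Sig'.IsSymm) (hp : Sig.PosDef) (hp' : Sig'.PosDef) :
    Tendsto (fun n : ℕ =>
        ∑' w : Fin d → ℤ,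
          |gauss ((n : ℝ) • Sig) (fun i => (w i : ℝ)) -
            gauss ((n : ℝ) • Sig') (fun i => (w i : ℝ))|)
      atTop
      (nhds (∫ w : Fin d → ℝ, |gauss Sig w - gauss Sig' w|)) :=
  gaussian_l1_limit_general Sig Sig' hp hp'

end NSVA
end
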